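/- arXiv:1603.05362 — 3 statements merged into one kernel-verified Lean document; each statement's English description precedes it below -/
import Mathlib

section
/- For every T ∈ (0,∞), every z ∈ ℝⁿ and every Lebesgue-measurable set E ⊆ (0,T) of positive measure: if B^⊤·exp((T−t)·A^⊤)·z = 0 for all t ∈ E, then B^⊤·exp((T−t)·A^⊤)·z = 0 for all t ∈ (0,T). -/
/-!
Setting: fix `n, m ≥ 1`, a matrix `A ∈ ℝ^{n×n}` and a nonzero matrix `B ∈ ℝ^{n×m}`.
States live in `EuclideanSpace ℝ (Fin n)` and control values in `EuclideanSpace ℝ (Fin m)`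
(so that all norms are the Euclidean ones).  For `y₀ ∈ ℝⁿ`, `t ≥ 0` and a control `u`,
the state is `y(t;y₀,u) = e^{tA} y₀ + ∫₀ᵗ e^{(t-s)A} B u(s) ds`.
-/

open MeasureTheory Set Matrix
open scoped ENNReal RealInnerProductSpace

noncomputable section

namespace ControlBBP

/-- Matrix–vector multiplication, regarded as a map between Euclidean spaces. -/
def mulVecE {a b : ℕ} (M : Matrix (Fin a) (Fin b) ℝ)
    (x : EuclideanSpace ℝ (Fin b)) : EuclideanSpace ℝ (Fin a) :=
  (EuclideanSpace.equiv (Fin a) ℝ).symm (M.mulVec (EuclideanSpace.equiv (Fin b) ℝ x))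

variable {n m : ℕ}

/-- `∫₀ᵀ e^{(T-s)A} B v(s) ds`, the state at time `T` starting from `0` with control `v`. -/
def reachOutput (A : Matrix (Fin n) (Fin n) ℝ) (B : Matrix (Fin n) (Fin m) ℝ)
    (T : ℝ) (v : ℝ → EuclideanSpace ℝ (Fin m)) : EuclideanSpace ℝ (Fin n) :=
  ∫ s in Ioc (0 : ℝ) T, mulVecE (NormedSpace.exp ((T - s) • A)) (mulVecE B (v s))

/-- The state `y(t; y₀, u) = e^{tA} y₀ + ∫₀ᵗ e^{(t-s)A} B u(s) ds`. -/
def state (A : Matrix (Fin n) (Fin n) ℝ) (B : Matrix (Fin n) (Fin m) ℝ)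
    (y0 : EuclideanSpace ℝ (Fin n)) (t : ℝ) (u : ℝ → EuclideanSpace ℝ (Fin m)) :
    EuclideanSpace ℝ (Fin n) :=
  mulVecE (NormedSpace.exp (t • A)) y0 + reachOutput A B t u

/-- The `L^∞(0,T;ℝ^m)`-norm of a control, valued in `[0,∞]`. -/
def supNorm (T : ℝ) (v : ℝ → EuclideanSpace ℝ (Fin m)) : ℝ≥0∞ :=
  eLpNorm v ⊤ (volume.restrict (Ioo (0 : ℝ) T))

/-- `v` is an admissible control for the minimal norm problem `(NP)^{T,y₀}`:
it is measurable, essentially bounded on `(0,T)`, and steers `y₀` to `0` at time `T`. -/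
def NPAdmissible (A : Matrix (Fin n) (Fin n) ℝ) (B : Matrix (Fin n) (Fin m) ℝ)
    (T : ℝ) (y0 : EuclideanSpace ℝ (Fin n)) (v : ℝ → EuclideanSpace ℝ (Fin m)) : Prop :=
  Measurable v ∧ supNorm T v < ⊤ ∧ state A B y0 T v = 0

/-- The minimal norm `N(T,y₀) ∈ [0,∞]` (with `inf ∅ = ∞`). -/
def Nmin (A : Matrix (Fin n) (Fin n) ℝ) (B : Matrix (Fin n) (Fin m) ℝ)
    (T : ℝ) (y0 : EuclideanSpace ℝ (Fin n)) : ℝ≥0∞ :=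
  ⨅ (v : ℝ → EuclideanSpace ℝ (Fin m)) (_ : NPAdmissible A B T y0 v), supNorm T v

/-- `v` is a minimal norm control for `(NP)^{T,y₀}`. -/
def IsMinNormControl (A : Matrix (Fin n) (Fin n) ℝ) (B : Matrix (Fin n) (Fin m) ℝ)
    (T : ℝ) (y0 : EuclideanSpace ℝ (Fin n)) (v : ℝ → EuclideanSpace ℝ (Fin m)) : Prop :=
  NPAdmissible A B T y0 v ∧ supNorm T v = Nmin A B T y0

/-- `(NP)^{T,y₀}` has the bang-bang property: every minimal norm control `v` satisfies
`‖v(t)‖ = N(T,y₀)` for a.e. `t ∈ (0,T)`. -/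
def NPBangBang (A : Matrix (Fin n) (Fin n) ℝ) (B : Matrix (Fin n) (Fin m) ℝ)
    (T : ℝ) (y0 : EuclideanSpace ℝ (Fin n)) : Prop :=
  ∀ v, IsMinNormControl A B T y0 v →
    ∀ᵐ t ∂(volume.restrict (Ioo (0 : ℝ) T)), ‖v t‖ = (Nmin A B T y0).toReal

/-- `ℛ`, the span of the columns of `B, AB, A²B, …, AⁿB`. -/
def reach (A : Matrix (Fin n) (Fin n) ℝ) (B : Matrix (Fin n) (Fin m) ℝ) :
    Submodule ℝ (EuclideanSpace ℝ (Fin n)) :=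
  Submodule.span ℝ
    {x | ∃ (k : ℕ) (j : Fin m), k ≤ n ∧ x = mulVecE (A ^ k * B) (EuclideanSpace.single j 1)}

/-- Membership in the constraint set `𝒰^M`: measurable and `‖u(t)‖ ≤ M` a.e. on `(0,∞)`. -/
def MemU (M : ℝ) (u : ℝ → EuclideanSpace ℝ (Fin m)) : Prop :=
  Measurable u ∧ ∀ᵐ t ∂(volume.restrict (Ioi (0 : ℝ))), ‖u t‖ ≤ M

/-- `u` is an admissible control for the minimal time problem `(TP)^{M,y₀}`. -/
def TPAdmissible (A : Matrix (Fin n) (Fin n) ℝ) (B : Matrix (Fin n) (Fin m) ℝ)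
    (M : ℝ) (y0 : EuclideanSpace ℝ (Fin n)) (u : ℝ → EuclideanSpace ℝ (Fin m)) : Prop :=
  MemU M u ∧ ∃ t : ℝ, 0 < t ∧ state A B y0 t u = 0

/-- The minimal time `T(M,y₀) ∈ (0,∞]` (with `inf ∅ = ∞`). -/
def minTime (A : Matrix (Fin n) (Fin n) ℝ) (B : Matrix (Fin n) (Fin m) ℝ)
    (M : ℝ) (y0 : EuclideanSpace ℝ (Fin n)) : ℝ≥0∞ :=
  ⨅ (t : ℝ) (_ : 0 < t ∧ ∃ u, MemU M u ∧ state A B y0 t u = 0), ENNReal.ofReal t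

/-- `u` is a minimal time control for `(TP)^{M,y₀}`: it lies in `𝒰^M` and
`y(T(M,y₀); y₀, u) = 0`. -/
def IsMinTimeControl (A : Matrix (Fin n) (Fin n) ℝ) (B : Matrix (Fin n) (Fin m) ℝ)
    (M : ℝ) (y0 : EuclideanSpace ℝ (Fin n)) (u : ℝ → EuclideanSpace ℝ (Fin m)) : Prop :=
  MemU M u ∧ state A B y0 (minTime A B M y0).toReal u = 0

/-- `(TP)^{M,y₀}` has the bang-bang property: every minimal time control `u` satisfies
`‖u(t)‖ = M` for a.e. `t ∈ (0, T(M,y₀))`. -/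
def TPBangBang (A : Matrix (Fin n) (Fin n) ℝ) (B : Matrix (Fin n) (Fin m) ℝ)
    (M : ℝ) (y0 : EuclideanSpace ℝ (Fin n)) : Prop :=
  ∀ u, IsMinTimeControl A B M y0 u →
    ∀ᵐ t ∂(volume.restrict (Ioo (0 : ℝ) (minTime A B M y0).toReal)), ‖u t‖ = M

/-- `N(∞,y₀) = inf_{T>0} N(T,y₀)`. -/
def Ninf (A : Matrix (Fin n) (Fin n) ℝ) (B : Matrix (Fin n) (Fin m) ℝ)
    (y0 : EuclideanSpace ℝ (Fin n)) : ℝ≥0∞ :=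
  ⨅ (T : ℝ) (_ : 0 < T), Nmin A B T y0

/-- `t ↦ B^⊤ e^{(T-t)A^⊤} z`. -/
def adjOut (A : Matrix (Fin n) (Fin n) ℝ) (B : Matrix (Fin n) (Fin m) ℝ)
    (T : ℝ) (z : EuclideanSpace ℝ (Fin n)) (t : ℝ) : EuclideanSpace ℝ (Fin m) :=
  mulVecE Bᵀ (mulVecE (NormedSpace.exp ((T - t) • Aᵀ)) z)

/-- The reachable set `R_T`. -/
def reachSet (A : Matrix (Fin n) (Fin n) ℝ) (B : Matrix (Fin n) (Fin m) ℝ)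
    (T : ℝ) : Set (EuclideanSpace ℝ (Fin n)) :=
  {x | ∃ v : ℝ → EuclideanSpace ℝ (Fin m),
    Measurable v ∧ supNorm T v < ⊤ ∧ reachOutput A B T v = x}

/-- The reachable norm `‖x‖_{R_T}`, valued in `[0,∞]`. -/
def reachNorm (A : Matrix (Fin n) (Fin n) ℝ) (B : Matrix (Fin n) (Fin m) ℝ)
    (T : ℝ) (x : EuclideanSpace ℝ (Fin n)) : ℝ≥0∞ :=
  ⨅ (v : ℝ → EuclideanSpace ℝ (Fin m))
    (_ : Measurable v ∧ supNorm T v < ⊤ ∧ reachOutput A B T v = x), supNorm T v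

attribute [local instance] Matrix.linftyOpNormedRing Matrix.linftyOpNormedAlgebra

/-- The map `M ↦ Bᵀ (M z)` as a continuous linear map on matrices. -/
def adjOutCLM (B : Matrix (Fin n) (Fin m) ℝ) (z : EuclideanSpace ℝ (Fin n)) :
    Matrix (Fin n) (Fin n) ℝ →L[ℝ] EuclideanSpace ℝ (Fin m) :=
  LinearMap.toContinuousLinearMap
    { toFun := fun M => mulVecE Bᵀ (mulVecE M z)
      map_add' := fun M N => by
        ext i
        simp [mulVecE, Matrix.add_mulVec, Matrix.mulVec_add]
      map_smul' := fun c M => by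
        ext i
        simp [mulVecE, Matrix.smul_mulVec, Matrix.mulVec_smul] }

lemma adjOut_analytic (A : Matrix (Fin n) (Fin n) ℝ) (B : Matrix (Fin n) (Fin m) ℝ)
    (T : ℝ) (z : EuclideanSpace ℝ (Fin n)) :
    AnalyticOnNhd ℝ (adjOut A B T z) Set.univ := by
  intro t _
  have h1 : AnalyticAt ℝ (fun t : ℝ => (T - t) • Aᵀ) t :=
    (analyticAt_const.sub analyticAt_id).smul analyticAt_const
  have h2 : AnalyticAt ℝ (fun t : ℝ => NormedSpace.exp ((T - t) • Aᵀ)) t :=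
    (NormedSpace.exp_analytic _).comp h1
  have h3 : AnalyticAt ℝ
      (fun t : ℝ => adjOutCLM B z (NormedSpace.exp ((T - t) • Aᵀ))) t :=
    ((adjOutCLM B z).analyticAt _).comp h2
  exact h3.congr (Filter.Eventually.of_forall fun s => rfl)

/-- For every `T ∈ (0,∞)`, every `z ∈ ℝⁿ` and every Lebesgue-measurable
`E ⊆ (0,T)` of positive measure: if `B^⊤ e^{(T-t)A^⊤} z = 0` for all `t ∈ E`, then
`B^⊤ e^{(T-t)A^⊤} z = 0` for all `t ∈ (0,T)`. -/
theorem statement3 {n m : ℕ} (hn : 1 ≤ n) (hm : 1 ≤ m)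
    (A : Matrix (Fin n) (Fin n) ℝ) (B : Matrix (Fin n) (Fin m) ℝ) (hB : B ≠ 0)
    (T : ℝ) (hT : 0 < T) (z : EuclideanSpace ℝ (Fin n))
    (E : Set ℝ) (hE : E ⊆ Ioo 0 T) (hEmeas : MeasurableSet E) (hEpos : 0 < volume E)
    (hvanish : ∀ t ∈ E, adjOut A B T z t = 0) :
    ∀ t ∈ Ioo (0 : ℝ) T, adjOut A B T z t = 0 := by
  obtain ⟨x₀, hx₀E, hx₀⟩ :=
    MeasureTheory.exists_mem_forall_mem_nhdsWithin_pos_measure (μ := volume) hEpos.ne'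
  have hfreq : ∃ᶠ s in nhdsWithin x₀ {x₀}ᶜ, adjOut A B T z s = 0 := by
    rw [Filter.frequently_iff]
    intro U hU
    rw [mem_nhdsWithin] at hU
    obtain ⟨V, hVopen, hVx, hVU⟩ := hU
    have hVE : 0 < volume (V ∩ E) :=
      hx₀ _ (mem_nhdsWithin.2 ⟨V, hVopen, hVx, inter_subset_inter_left E subset_rfl⟩)
    have hpos : 0 < volume ((V ∩ E) \ {x₀}) := by
      rwa [measure_diff_null (measure_singleton x₀)]
    obtain ⟨s, hs⟩ := nonempty_of_measure_ne_zero hpos.ne'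
    exact ⟨s, hVU ⟨hs.1.1, hs.2⟩, hvanish s hs.1.2⟩
  have := (adjOut_analytic A B T z).eqOn_zero_of_preconnected_of_frequently_eq_zero
    isPreconnected_univ (mem_univ x₀) hfreq
  intro t _
  exact this (mem_univ t)

end ControlBBP
end
end

section
/- For all 0 < t < T < ∞ there exists a constant C = C(A,B,T,t) > 0 such that for every z ∈ ℝⁿ: (∫₀^t ‖B^⊤·exp((T−s)·A^⊤)·z‖² ds)^{1/2} ≤ C·∫_t^T ‖B^⊤·exp((T−s)·A^⊤)·z‖ ds. -/
/-!
Setting: fix `n, m ≥ 1`, a matrix `A ∈ ℝ^{n×n}` and a nonzero matrix `B ∈ ℝ^{n×m}`.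
States live in `EuclideanSpace ℝ (Fin n)` and control values in `EuclideanSpace ℝ (Fin m)`
(so that all norms are the Euclidean ones).  For `y₀ ∈ ℝⁿ`, `t ≥ 0` and a control `u`,
the state is `y(t;y₀,u) = e^{tA} y₀ + ∫₀ᵗ e^{(t-s)A} B u(s) ds`.
-/

open MeasureTheory Set Matrix
open scoped ENNReal RealInnerProductSpace

noncomputable section

namespace ControlBBP

variable {n m : ℕ}

section Statement4Aux

attribute [local instance] Matrix.linftyOpNormedAddCommGroup Matrix.linftyOpNormedSpace
  Matrix.linftyOpNormedRing Matrix.linftyOpNormedAlgebra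

open NormedSpace

variable {n m : ℕ}

/-- A matrix regarded as a continuous linear map between Euclidean spaces. -/
def matCLM {a b : ℕ} (M : Matrix (Fin a) (Fin b) ℝ) :
    EuclideanSpace ℝ (Fin b) →L[ℝ] EuclideanSpace ℝ (Fin a) :=
  LinearMap.toContinuousLinearMap (Matrix.toEuclideanLin M)

lemma continuous_matCLM {a b : ℕ} : Continuous (fun M : Matrix (Fin a) (Fin b) ℝ => matCLM M) := by
  have h : IsLinearMap ℝ (fun M : Matrix (Fin a) (Fin b) ℝ => matCLM M) :=
    ⟨fun X Y => by simp [matCLM, map_add], fun c X => by simp [matCLM, _root_.map_smul]⟩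
  exact (IsLinearMap.mk' _ h).continuous_of_finiteDimensional

lemma matCLM_add {a b : ℕ} (X Y : Matrix (Fin a) (Fin b) ℝ) :
    matCLM (X + Y) = matCLM X + matCLM Y := by simp [matCLM, map_add]

lemma matCLM_smul {a b : ℕ} (c : ℝ) (X : Matrix (Fin a) (Fin b) ℝ) :
    matCLM (c • X) = c • matCLM X := by simp [matCLM, _root_.map_smul]

lemma adjOut_eq (A : Matrix (Fin n) (Fin n) ℝ) (B : Matrix (Fin n) (Fin m) ℝ)
    (T : ℝ) (z : EuclideanSpace ℝ (Fin n)) (s : ℝ) :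
    adjOut A B T z s = matCLM (Bᵀ * exp ((T - s) • Aᵀ)) z := by
  show WithLp.toLp 2 (Bᵀ.mulVec ((exp ((T - s) • Aᵀ)).mulVec z.ofLp)) =
    WithLp.toLp 2 ((Bᵀ * exp ((T - s) • Aᵀ)).mulVec z.ofLp)
  rw [Matrix.mulVec_mulVec]

lemma adjOut_smul (A : Matrix (Fin n) (Fin n) ℝ) (B : Matrix (Fin n) (Fin m) ℝ)
    (T : ℝ) (c : ℝ) (z : EuclideanSpace ℝ (Fin n)) (s : ℝ) :
    adjOut A B T (c • z) s = c • adjOut A B T z s := by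
  rw [adjOut_eq, adjOut_eq, _root_.map_smul]

lemma adjOut_sub (A : Matrix (Fin n) (Fin n) ℝ) (B : Matrix (Fin n) (Fin m) ℝ)
    (T : ℝ) (z₁ z₂ : EuclideanSpace ℝ (Fin n)) (s : ℝ) :
    adjOut A B T (z₁ - z₂) s = adjOut A B T z₁ s - adjOut A B T z₂ s := by
  rw [adjOut_eq, adjOut_eq, adjOut_eq, map_sub]

lemma adjOut_zero (A : Matrix (Fin n) (Fin n) ℝ) (B : Matrix (Fin n) (Fin m) ℝ)
    (T : ℝ) (s : ℝ) : adjOut A B T (0 : EuclideanSpace ℝ (Fin n)) s = 0 := by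
  rw [adjOut_eq, map_zero]

lemma continuous_matCLM_mulLeft (B : Matrix (Fin n) (Fin m) ℝ) :
    Continuous fun X : Matrix (Fin n) (Fin n) ℝ => matCLM (Bᵀ * X) := by
  have h : IsLinearMap ℝ (fun X : Matrix (Fin n) (Fin n) ℝ => matCLM (Bᵀ * X)) :=
    ⟨fun X Y => by rw [Matrix.mul_add, matCLM_add],
     fun c X => by rw [Matrix.mul_smul, matCLM_smul]⟩
  exact (IsLinearMap.mk' _ h).continuous_of_finiteDimensional

lemma continuous_expArg (A : Matrix (Fin n) (Fin n) ℝ) (T : ℝ) :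
    Continuous fun s : ℝ => exp ((T - s) • Aᵀ) := by
  have hsm : Continuous fun s : ℝ => (T - s) • Aᵀ :=
    (continuous_const.sub continuous_id).smul continuous_const
  exact exp_continuous.comp hsm

lemma continuous_adjOut (A : Matrix (Fin n) (Fin n) ℝ) (B : Matrix (Fin n) (Fin m) ℝ)
    (T : ℝ) (z : EuclideanSpace ℝ (Fin n)) : Continuous (adjOut A B T z) := by
  have h2 : adjOut A B T z = fun s => matCLM (Bᵀ * exp ((T - s) • Aᵀ)) z :=
    funext fun s => adjOut_eq A B T z s
  rw [h2]
  exact (((continuous_matCLM_mulLeft B).comp (continuous_expArg A T)).clm_apply continuous_const)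

lemma exists_adjBound (A : Matrix (Fin n) (Fin n) ℝ) (B : Matrix (Fin n) (Fin m) ℝ)
    {T : ℝ} (hT : 0 < T) :
    ∃ K : ℝ, 0 < K ∧ ∀ s ∈ Icc (0:ℝ) T, ∀ z, ‖adjOut A B T z s‖ ≤ K * ‖z‖ := by
  have h1 : Continuous fun s : ℝ => ‖matCLM (Bᵀ * exp ((T - s) • Aᵀ))‖ :=
    (((continuous_matCLM_mulLeft B).comp (continuous_expArg A T))).norm
  obtain ⟨s₀, -, hs₀⟩ := isCompact_Icc.exists_isMaxOn (nonempty_Icc.2 hT.le) h1.continuousOn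
  refine ⟨‖matCLM (Bᵀ * exp ((T - s₀) • Aᵀ))‖ + 1, by positivity, fun s hs z => ?_⟩
  rw [adjOut_eq]
  have h2 := (matCLM (Bᵀ * exp ((T - s) • Aᵀ))).le_opNorm z
  have h3 : ‖matCLM (Bᵀ * exp ((T - s) • Aᵀ))‖ ≤ ‖matCLM (Bᵀ * exp ((T - s₀) • Aᵀ))‖ := hs₀ hs
  nlinarith [norm_nonneg z]

/-- The common kernel of `z ↦ B^⊤ e^{(T-s)A^⊤} z` over all times `s`. -/
def adjKer (A : Matrix (Fin n) (Fin n) ℝ) (B : Matrix (Fin n) (Fin m) ℝ) (T : ℝ) :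
    Submodule ℝ (EuclideanSpace ℝ (Fin n)) where
  carrier := {z | ∀ s : ℝ, adjOut A B T z s = 0}
  add_mem' := fun {x y} hx hy => by
    intro s
    rw [adjOut_eq, map_add, ← adjOut_eq, ← adjOut_eq, hx s, hy s, add_zero]
  zero_mem' := fun s => by rw [adjOut_eq, map_zero]
  smul_mem' := fun c x hx => by
    intro s
    rw [adjOut_eq, _root_.map_smul, ← adjOut_eq, hx s, smul_zero]

lemma mem_adjKer_of_vanish (A : Matrix (Fin n) (Fin n) ℝ) (B : Matrix (Fin n) (Fin m) ℝ)
    {t T : ℝ} (ht : 0 < t) (hT : t < T) (z : EuclideanSpace ℝ (Fin n))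
    (h : ∀ s ∈ Ioo t T, adjOut A B T z s = 0) : z ∈ adjKer A B T := by
  set M := Aᵀ with hM
  have hlin : IsLinearMap ℝ (fun X : Matrix (Fin n) (Fin n) ℝ => matCLM (Bᵀ * X) z) :=
    ⟨fun X Y => by rw [Matrix.mul_add, matCLM_add, ContinuousLinearMap.add_apply],
     fun c X => by rw [Matrix.mul_smul, matCLM_smul, ContinuousLinearMap.smul_apply]⟩
  set Φ : Matrix (Fin n) (Fin n) ℝ →L[ℝ] EuclideanSpace ℝ (Fin m) :=
    LinearMap.toContinuousLinearMap (IsLinearMap.mk' _ hlin) with hΦdef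
  have hΦ_apply : ∀ X, Φ X = matCLM (Bᵀ * X) z := fun X => rfl
  have h' : ∀ r ∈ Ioo (0:ℝ) (T - t), Φ (exp (r • M)) = 0 := by
    intro r hr
    have h1 := h (T - r) ⟨by linarith [hr.2], by linarith [hr.1]⟩
    rw [adjOut_eq, show T - (T - r) = r by ring] at h1
    rw [hΦ_apply]
    exact h1
  have key : ∀ k : ℕ, ∀ r ∈ Ioo (0:ℝ) (T - t), Φ (M ^ k * exp (r • M)) = 0 := by
    intro k
    induction k with
    | zero => intro r hr; simpa using h' r hr
    | succ k ih =>
      intro r hr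
      have h1 := hasDerivAt_exp_smul_const (𝕂 := ℝ) M r
      have h2 := ((Φ.comp (ContinuousLinearMap.mul ℝ (Matrix (Fin n) (Fin n) ℝ) (M ^ k))).hasFDerivAt).comp_hasDerivAt r h1
      have hq : HasDerivAt (fun u : ℝ => Φ (M ^ k * exp (u • M)))
          (Φ (M ^ k * (exp (r • M) * M))) r := by
        exact h2
      have hq0 : HasDerivAt (fun u : ℝ => Φ (M ^ k * exp (u • M))) 0 r := by
        refine (hasDerivAt_const r (0 : EuclideanSpace ℝ (Fin m))).congr_of_eventuallyEq ?_
        filter_upwards [isOpen_Ioo.mem_nhds hr] with u hu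
        exact ih u hu
      have heq := hq.unique hq0
      have hcomm : exp (r • M) * M = M * exp (r • M) :=
        (((Commute.refl M).smul_left r).exp_left).eq
      rwa [hcomm, ← mul_assoc, ← pow_succ] at heq
  intro s
  rw [adjOut_eq, ← hΦ_apply]
  set r₀ : ℝ := (T - t) / 2 with hr₀def
  have hr₀ : r₀ ∈ Ioo (0:ℝ) (T - t) := ⟨by rw [hr₀def]; linarith, by rw [hr₀def]; linarith⟩
  have hsplit : exp ((T - s) • M) = exp ((T - s - r₀) • M) * exp (r₀ • M) := by
    refine Eq.trans ?_ (NormedSpace.exp_add_of_commute (((Commute.refl M).smul_left (T - s - r₀)).smul_right r₀))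
    congr 1
    rw [← add_smul]
    ring_nf
  rw [hsplit]
  set Ψ : Matrix (Fin n) (Fin n) ℝ →L[ℝ] EuclideanSpace ℝ (Fin m) :=
    Φ.comp ((ContinuousLinearMap.mul ℝ (Matrix (Fin n) (Fin n) ℝ)).flip (exp (r₀ • M))) with hΨdef
  have hΨ_apply : ∀ X, Ψ X = Φ (X * exp (r₀ • M)) := fun X => by
    rfl
  have hsum := expSeries_hasSum_exp_of_mem_ball' (𝕂 := ℝ) ((T - s - r₀) • M)
      (by rw [expSeries_radius_eq_top]; exact edist_lt_top _ _)
  have hmap := hsum.mapL Ψ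
  have hzero : ∀ k : ℕ, Ψ ((k.factorial⁻¹ : ℝ) • ((T - s - r₀) • M) ^ k) = 0 := by
    intro k
    rw [smul_pow, _root_.map_smul, _root_.map_smul, hΨ_apply, key k r₀ hr₀, smul_zero, smul_zero]
  have h0 : HasSum (fun k : ℕ => Ψ ((k.factorial⁻¹ : ℝ) • ((T - s - r₀) • M) ^ k)) 0 := by
    simpa [hzero] using (hasSum_zero : HasSum (fun _ : ℕ => (0 : EuclideanSpace ℝ (Fin m))) 0)
  have := hmap.unique h0
  rw [hΨ_apply] at this
  exact this

lemma adjOut_eq_zero_on_Ioo (A : Matrix (Fin n) (Fin n) ℝ) (B : Matrix (Fin n) (Fin m) ℝ)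
    (T : ℝ) {a b : ℝ} (z : EuclideanSpace ℝ (Fin n))
    (h : (∫ s in Ioc a b, ‖adjOut A B T z s‖) = 0) :
    ∀ s ∈ Ioo a b, adjOut A B T z s = 0 := by
  have hc : Continuous fun s => ‖adjOut A B T z s‖ := (continuous_adjOut A B T z).norm
  have hint : IntegrableOn (fun s => ‖adjOut A B T z s‖) (Ioc a b) := hc.integrableOn_Ioc
  have hae := (integral_eq_zero_iff_of_nonneg (fun s => norm_nonneg _) hint).mp h
  intro s hs
  by_contra hne
  have hopen : IsOpen {u | u ∈ Ioo a b ∧ adjOut A B T z u ≠ 0} := by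
    have he : {u | u ∈ Ioo a b ∧ adjOut A B T z u ≠ 0}
        = Ioo a b ∩ (adjOut A B T z) ⁻¹' ({0}ᶜ) := rfl
    rw [he]
    exact isOpen_Ioo.inter (isOpen_compl_singleton.preimage (continuous_adjOut A B T z))
  have hpos := hopen.measure_pos volume ⟨s, hs, hne⟩
  have hmeas : MeasurableSet {u : ℝ | ¬ ‖adjOut A B T z u‖ = 0} :=
    hc.measurable (measurableSet_singleton (0:ℝ)).compl
  have hnull : volume ({u : ℝ | ¬ ‖adjOut A B T z u‖ = 0} ∩ Ioc a b) = 0 := by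
    have h1 := ae_iff.mp hae
    simp only [Pi.zero_apply] at h1
    rwa [Measure.restrict_apply hmeas] at h1
  have hsub : {u | u ∈ Ioo a b ∧ adjOut A B T z u ≠ 0}
      ⊆ {u : ℝ | ¬ ‖adjOut A B T z u‖ = 0} ∩ Ioc a b := by
    intro u hu
    exact ⟨by simpa [norm_eq_zero] using hu.2, Ioo_subset_Ioc_self hu.1⟩
  exact absurd (le_antisymm (hnull ▸ measure_mono hsub) zero_le) hpos.ne'

end Statement4Aux

/-- For all `0 < t < T < ∞` there is `C = C(A,B,T,t) > 0` such that for
every `z ∈ ℝⁿ`: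
`(∫₀ᵗ ‖B^⊤ e^{(T-s)A^⊤} z‖² ds)^{1/2} ≤ C ∫ₜᵀ ‖B^⊤ e^{(T-s)A^⊤} z‖ ds`. -/
theorem statement4 {n m : ℕ} (hn : 1 ≤ n) (hm : 1 ≤ m)
    (A : Matrix (Fin n) (Fin n) ℝ) (B : Matrix (Fin n) (Fin m) ℝ) (hB : B ≠ 0)
    (t T : ℝ) (h0 : 0 < t) (hT : t < T) :
    ∃ C : ℝ, 0 < C ∧ ∀ z : EuclideanSpace ℝ (Fin n),
      Real.sqrt (∫ s in Ioc (0 : ℝ) t, ‖adjOut A B T z s‖ ^ 2) ≤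
        C * ∫ s in Ioc t T, ‖adjOut A B T z s‖ := by
  clear hn hm hB
  have hT0 : (0:ℝ) < T := h0.trans hT
  obtain ⟨K, hK, hKb⟩ := exists_adjBound A B hT0
  set W := adjKer A B T with hWdef
  set g : EuclideanSpace ℝ (Fin n) → ℝ := fun z => ∫ s in Ioc t T, ‖adjOut A B T z s‖ with hgdef
  have hgint : ∀ (z : EuclideanSpace ℝ (Fin n)) (a b : ℝ),
      IntegrableOn (fun s => ‖adjOut A B T z s‖) (Ioc a b) :=
    fun z a b => ((continuous_adjOut A B T z).norm).integrableOn_Ioc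
  have hg0 : ∀ z, 0 ≤ g z :=
    fun z => setIntegral_nonneg measurableSet_Ioc (fun s _ => norm_nonneg _)
  have hglip : ∀ z₁ z₂, |g z₁ - g z₂| ≤ (K * (T - t)) * ‖z₁ - z₂‖ := by
    intro z₁ z₂
    have hsub : g z₁ - g z₂
        = ∫ s in Ioc t T, (‖adjOut A B T z₁ s‖ - ‖adjOut A B T z₂ s‖) :=
      (integral_sub (hgint z₁ t T) (hgint z₂ t T)).symm
    rw [hsub, ← Real.norm_eq_abs]
    have hvol : volume (Ioc t T) < ⊤ := measure_Ioc_lt_top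
    have hb : ∀ s ∈ Ioc t T,
        ‖‖adjOut A B T z₁ s‖ - ‖adjOut A B T z₂ s‖‖ ≤ K * ‖z₁ - z₂‖ := by
      intro s hs
      have h1 : |‖adjOut A B T z₁ s‖ - ‖adjOut A B T z₂ s‖|
          ≤ ‖adjOut A B T z₁ s - adjOut A B T z₂ s‖ := abs_norm_sub_norm_le _ _
      rw [Real.norm_eq_abs]
      refine h1.trans ?_
      rw [← adjOut_sub]
      exact hKb s ⟨(h0.trans hs.1).le, hs.2⟩ _
    have := norm_setIntegral_le_of_norm_le_const hvol hb
    refine this.trans ?_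
    rw [Real.volume_real_Ioc_of_le (by linarith)]
    nlinarith [norm_nonneg (z₁ - z₂)]
  have hgcont : Continuous g := by
    have hlw : LipschitzWith (Real.toNNReal (K * (T - t))) g := by
      refine LipschitzWith.of_dist_le_mul fun z₁ z₂ => ?_
      rw [Real.dist_eq, dist_eq_norm]
      refine (hglip z₁ z₂).trans (le_of_eq ?_)
      rw [Real.coe_toNNReal _ (by nlinarith)]
    exact hlw.continuous
  by_cases hbot : Wᗮ = ⊥
  · have htop : W = ⊤ := Submodule.orthogonal_eq_bot_iff.mp hbot
    refine ⟨1, one_pos, fun z => ?_⟩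
    have hz : z ∈ W := htop ▸ Submodule.mem_top
    have hz' : ∀ s, adjOut A B T z s = 0 := hz
    have hL : (∫ s in Ioc (0 : ℝ) t, ‖adjOut A B T z s‖ ^ 2) = 0 := by
      simp [hz']
    rw [hL, Real.sqrt_zero, one_mul]
    exact setIntegral_nonneg measurableSet_Ioc (fun s _ => norm_nonneg _)
  · obtain ⟨x, hxW, hx0⟩ := Submodule.exists_mem_ne_zero_of_ne_bot hbot
    set Sp : Set (EuclideanSpace ℝ (Fin n)) := {w | w ∈ Wᗮ ∧ ‖w‖ = 1} with hSpdef
    have hSpeq : Sp = (Wᗮ : Set (EuclideanSpace ℝ (Fin n))) ∩ Metric.sphere 0 1 := by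
      ext w
      simp [hSpdef, mem_sphere_zero_iff_norm]
    have hSpc : IsCompact Sp := by
      refine (isCompact_sphere (0 : EuclideanSpace ℝ (Fin n)) 1).of_isClosed_subset ?_ ?_
      · rw [hSpeq]
        exact (Submodule.closed_of_finiteDimensional _).inter Metric.isClosed_sphere
      · intro w hw
        simpa [mem_sphere_zero_iff_norm] using hw.2
    have hSpne : Sp.Nonempty := by
      refine ⟨‖x‖⁻¹ • x, Submodule.smul_mem _ _ hxW, ?_⟩
      rw [norm_smul, norm_inv, norm_norm, inv_mul_cancel₀ (norm_ne_zero_iff.mpr hx0)]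
    obtain ⟨w₀, hw₀Sp, hw₀min⟩ := hSpc.exists_isMinOn hSpne hgcont.continuousOn
    have hw₀min' : ∀ w ∈ Sp, g w₀ ≤ g w := fun w hw => hw₀min hw
    have hgw₀ : 0 < g w₀ := by
      rcases lt_or_eq_of_le (hg0 w₀) with hlt | heq
      · exact hlt
      · exfalso
        have hvan := adjOut_eq_zero_on_Ioo A B T w₀ heq.symm
        have hker : w₀ ∈ W := mem_adjKer_of_vanish A B h0 hT w₀ hvan
        have hperp := hw₀Sp.1
        have hin : ⟪w₀, w₀⟫ = 0 := (Submodule.mem_orthogonal _ _).mp hperp w₀ hker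
        have h00 : w₀ = 0 := inner_self_eq_zero.mp hin
        have := hw₀Sp.2
        rw [h00, norm_zero] at this
        exact one_ne_zero this.symm
    refine ⟨(K * Real.sqrt t + 1) / g w₀, by positivity, fun z => ?_⟩
    set v : EuclideanSpace ℝ (Fin n) := (W.orthogonalProjectionOnto z : EuclideanSpace ℝ (Fin n))
      with hvdef
    set w : EuclideanSpace ℝ (Fin n) := z - v with hwdef
    have hwperp : w ∈ Wᗮ := W.sub_starProjection_mem_orthogonal z
    have hvW : v ∈ W := SetLike.coe_mem _
    have hvzero : ∀ s, adjOut A B T v s = 0 := hvW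
    have hadj : ∀ s, adjOut A B T z s = adjOut A B T w s := by
      intro s
      have h1 : adjOut A B T w s = adjOut A B T z s - adjOut A B T v s := by
        rw [hwdef, adjOut_sub]
      rw [h1, hvzero s, sub_zero]
    have hL1 : ∀ s ∈ Ioc (0:ℝ) t, ‖adjOut A B T z s‖ ^ 2 ≤ (K * ‖w‖) ^ 2 := by
      intro s hs
      have hsIcc : s ∈ Icc (0:ℝ) T := ⟨hs.1.le, hs.2.trans hT.le⟩
      rw [hadj s]
      have h1 := hKb s hsIcc w
      have h2 : (0:ℝ) ≤ ‖adjOut A B T w s‖ := norm_nonneg _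
      nlinarith
    have hint2 : IntegrableOn (fun s => ‖adjOut A B T z s‖ ^ 2) (Ioc 0 t) :=
      (((continuous_adjOut A B T z).norm).pow 2).integrableOn_Ioc
    have hmono : (∫ s in Ioc (0:ℝ) t, ‖adjOut A B T z s‖ ^ 2)
        ≤ ∫ _ in Ioc (0:ℝ) t, (K * ‖w‖) ^ 2 :=
      setIntegral_mono_on hint2 (integrableOn_const measure_Ioc_lt_top.ne)
        measurableSet_Ioc hL1
    have hconst : (∫ _ in Ioc (0:ℝ) t, (K * ‖w‖) ^ 2) = t * (K * ‖w‖) ^ 2 := by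
      rw [setIntegral_const, Real.volume_real_Ioc_of_le (by linarith), sub_zero,
        smul_eq_mul]
    have hLHS : Real.sqrt (∫ s in Ioc (0:ℝ) t, ‖adjOut A B T z s‖ ^ 2)
        ≤ K * ‖w‖ * Real.sqrt t := by
      have h1 : Real.sqrt (∫ s in Ioc (0:ℝ) t, ‖adjOut A B T z s‖ ^ 2)
          ≤ Real.sqrt (t * (K * ‖w‖) ^ 2) := Real.sqrt_le_sqrt (hmono.trans hconst.le)
      refine h1.trans (le_of_eq ?_)
      rw [Real.sqrt_mul h0.le, Real.sqrt_sq (by positivity)]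
      ring
    have hgz : g z = g w := by
      rw [hgdef]
      exact setIntegral_congr_fun measurableSet_Ioc (fun s _ => by rw [hadj s])
    have hgw : ‖w‖ * g w₀ ≤ g w := by
      rcases eq_or_ne w 0 with hw0 | hw0
      · rw [hw0, norm_zero, zero_mul]
        exact hg0 0
      · have hu : (‖w‖⁻¹ • w) ∈ Sp := by
          refine ⟨Submodule.smul_mem _ _ hwperp, ?_⟩
          rw [norm_smul, norm_inv, norm_norm, inv_mul_cancel₀ (norm_ne_zero_iff.mpr hw0)]
        have h1 := hw₀min' _ hu
        have h2 : g (‖w‖⁻¹ • w) = ‖w‖⁻¹ * g w := by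
          rw [hgdef]
          simp only
          rw [← integral_const_mul]
          refine setIntegral_congr_fun measurableSet_Ioc (fun s _ => ?_)
          rw [adjOut_smul, norm_smul, norm_inv, norm_norm]
        rw [h2] at h1
        have hwn : (0:ℝ) < ‖w‖ := norm_pos_iff.mpr hw0
        calc ‖w‖ * g w₀ ≤ ‖w‖ * (‖w‖⁻¹ * g w) := by
              exact mul_le_mul_of_nonneg_left h1 hwn.le
          _ = g w := by field_simp
    have hrhs : (∫ s in Ioc t T, ‖adjOut A B T z s‖) = g z := rfl
    rw [hrhs, div_mul_eq_mul_div, le_div_iff₀ hgw₀]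
    have hm1 : Real.sqrt (∫ s in Ioc (0:ℝ) t, ‖adjOut A B T z s‖ ^ 2) * g w₀
        ≤ (K * ‖w‖ * Real.sqrt t) * g w₀ :=
      mul_le_mul_of_nonneg_right hLHS hgw₀.le
    have hm2 : (K * Real.sqrt t) * (‖w‖ * g w₀) ≤ (K * Real.sqrt t) * g w :=
      mul_le_mul_of_nonneg_left hgw (by positivity)
    calc Real.sqrt (∫ s in Ioc (0:ℝ) t, ‖adjOut A B T z s‖ ^ 2) * g w₀
        ≤ K * ‖w‖ * Real.sqrt t * g w₀ := hm1
      _ = K * Real.sqrt t * (‖w‖ * g w₀) := by ring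
      _ ≤ K * Real.sqrt t * g w := hm2
      _ = K * Real.sqrt t * g z := by rw [hgz]
      _ ≤ (K * Real.sqrt t + 1) * g z := by nlinarith [hg0 z]

end ControlBBP
end
end

section
/- For every y₀ ∈ ℝⁿ \ {0}, N(T,y₀) → ∞ as T → 0⁺; that is, for every M ∈ (0,∞) there exists δ > 0 such that N(T,y₀) > M (in [0,∞]) for all T ∈ (0,δ). -/
/-!
Setting: fix `n, m ≥ 1`, a matrix `A ∈ ℝ^{n×n}` and a nonzero matrix `B ∈ ℝ^{n×m}`.
States live in `EuclideanSpace ℝ (Fin n)` and control values in `EuclideanSpace ℝ (Fin m)`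
(so that all norms are the Euclidean ones).  For `y₀ ∈ ℝⁿ`, `t ≥ 0` and a control `u`,
the state is `y(t;y₀,u) = e^{tA} y₀ + ∫₀ᵗ e^{(t-s)A} B u(s) ds`.
-/

open MeasureTheory Set Matrix
open scoped ENNReal RealInnerProductSpace

noncomputable section

namespace ControlBBP

variable {n m : ℕ}

section AuxStatement6

variable {n : ℕ}

/-- `Matrix.toEuclideanCLM` bundled as a continuous linear map (for transporting `tsum`s). -/
def eCLM {n : ℕ} :
    Matrix (Fin n) (Fin n) ℝ →L[ℝ] (EuclideanSpace ℝ (Fin n) →L[ℝ] EuclideanSpace ℝ (Fin n)) :=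
  LinearMap.toContinuousLinearMap
  { toFun := ⇑(Matrix.toEuclideanCLM (𝕜 := ℝ))
    map_add' := fun x y => map_add _ x y
    map_smul' := fun c x => _root_.map_smul _ c x }

lemma eCLM_apply (X : Matrix (Fin n) (Fin n) ℝ) :
    eCLM X = Matrix.toEuclideanCLM (𝕜 := ℝ) X := rfl

set_option synthInstance.maxHeartbeats 1000000 in
set_option maxHeartbeats 1000000 in
lemma toEuclideanCLM_exp (X : Matrix (Fin n) (Fin n) ℝ) :
    Matrix.toEuclideanCLM (𝕜 := ℝ) (NormedSpace.exp X)
      = NormedSpace.exp (Matrix.toEuclideanCLM (𝕜 := ℝ) X) := by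
  have hg : Summable (fun k : ℕ => (k.factorial⁻¹ : ℝ) • (Matrix.toEuclideanCLM (𝕜 := ℝ) X) ^ k) :=
    NormedSpace.expSeries_summable' _
  have hsum : Summable (fun k : ℕ => (k.factorial⁻¹ : ℝ) • X ^ k) := by
    let L : (EuclideanSpace ℝ (Fin n) →L[ℝ] EuclideanSpace ℝ (Fin n)) →ₗ[ℝ]
        Matrix (Fin n) (Fin n) ℝ :=
      { toFun := ⇑(Matrix.toEuclideanCLM (𝕜 := ℝ)).symm
        map_add' := fun x y => map_add _ x y
        map_smul' := fun c x => _root_.map_smul _ c x }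
    have := hg.map L (LinearMap.continuous_of_finiteDimensional L)
    refine this.congr fun k => ?_
    show (Matrix.toEuclideanCLM (𝕜 := ℝ)).symm _ = _
    rw [_root_.map_smul, map_pow, StarAlgEquiv.symm_apply_apply]
  rw [NormedSpace.exp_eq_tsum ℝ, NormedSpace.exp_eq_tsum ℝ]
  rw [← eCLM_apply, eCLM.map_tsum hsum]
  congr 1
  funext k
  rw [_root_.map_smul, eCLM_apply, map_pow]

lemma norm_exp_le_exp_norm (hn : 1 ≤ n)
    (L : EuclideanSpace ℝ (Fin n) →L[ℝ] EuclideanSpace ℝ (Fin n)) :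
    ‖NormedSpace.exp L‖ ≤ Real.exp ‖L‖ := by
  haveI : Nontrivial (EuclideanSpace ℝ (Fin n)) := by
    refine ⟨EuclideanSpace.single ⟨0, hn⟩ (1 : ℝ), 0, fun h => ?_⟩
    have := congrFun (congrArg (fun x : EuclideanSpace ℝ (Fin n) => (x : Fin n → ℝ)) h) ⟨0, hn⟩
    simp [EuclideanSpace.single_apply] at this
  rw [NormedSpace.exp_eq_tsum ℝ]
  refine (norm_tsum_le_tsum_norm (NormedSpace.norm_expSeries_summable' L)).trans ?_
  have hR : Real.exp ‖L‖ = ∑' k : ℕ, (k.factorial⁻¹ : ℝ) • ‖L‖ ^ k := by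
    rw [Real.exp_eq_exp_ℝ, NormedSpace.exp_eq_tsum ℝ]
  rw [hR]
  refine Summable.tsum_le_tsum (fun k => ?_) (NormedSpace.norm_expSeries_summable' L)
    (NormedSpace.expSeries_summable' (𝔸 := ℝ) ‖L‖)
  rw [norm_smul, smul_eq_mul, Real.norm_eq_abs, abs_of_nonneg (by positivity)]
  exact mul_le_mul_of_nonneg_left (norm_pow_le L k) (by positivity)

end AuxStatement6

set_option maxHeartbeats 2000000 in
set_option synthInstance.maxHeartbeats 4000000 in
/-- For every `y₀ ∈ ℝⁿ \ {0}`, `N(T,y₀) → ∞` as `T → 0⁺`: for every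
`M ∈ (0,∞)` there is `δ > 0` such that `N(T,y₀) > M` (in `[0,∞]`) for all `T ∈ (0,δ)`. -/
theorem statement6 {n m : ℕ} (hn : 1 ≤ n) (hm : 1 ≤ m)
    (A : Matrix (Fin n) (Fin n) ℝ) (B : Matrix (Fin n) (Fin m) ℝ) (hB : B ≠ 0)
    (y0 : EuclideanSpace ℝ (Fin n)) (hy0 : y0 ≠ 0) (M : ℝ) (hM : 0 < M) :
    ∃ δ : ℝ, 0 < δ ∧ ∀ T : ℝ, 0 < T → T < δ → ENNReal.ofReal M < Nmin A B T y0 := by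
  classical
  have hy0' : 0 < ‖y0‖ := norm_pos_iff.2 hy0
  set Bc : EuclideanSpace ℝ (Fin m) →L[ℝ] EuclideanSpace ℝ (Fin n) :=
    LinearMap.toContinuousLinearMap (Matrix.toEuclideanLin B) with hBcdef
  set C : ℝ := Real.exp ‖Matrix.toEuclideanCLM (𝕜 := ℝ) A‖ with hCdef
  have hC0 : 0 < C := Real.exp_pos _
  have hC1 : 1 ≤ C := Real.one_le_exp (norm_nonneg _)
  set D : ℝ := C * (‖Bc‖ * (2 * M)) + 1 with hDdef
  have hD0 : 0 < D := by positivity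
  refine ⟨min 1 (‖y0‖ / (C * D)), lt_min one_pos (by positivity), fun T hT hTδ => ?_⟩
  have hT1 : T ≤ 1 := le_of_lt (lt_of_lt_of_le hTδ (min_le_left _ _))
  have hT2 : T < ‖y0‖ / (C * D) := lt_of_lt_of_le hTδ (min_le_right _ _)
  by_contra hcon
  push_neg at hcon
  have h2 : Nmin A B T y0 < ENNReal.ofReal (2 * M) :=
    lt_of_le_of_lt hcon ((ENNReal.ofReal_lt_ofReal_iff (by positivity)).2 (by linarith))
  obtain ⟨v, hvadm, hvlt⟩ :
      ∃ v, NPAdmissible A B T y0 v ∧ supNorm T v < ENNReal.ofReal (2 * M) := by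
    rw [Nmin] at h2
    simp only [iInf_lt_iff] at h2
    obtain ⟨v, hv1, hv2⟩ := h2
    exact ⟨v, hv1, hv2⟩
  have hres : volume.restrict (Ioo (0 : ℝ) T) = volume.restrict (Ioc (0 : ℝ) T) :=
    Measure.restrict_congr_set Ioo_ae_eq_Ioc
  have hvb : ∀ᵐ s ∂(volume.restrict (Ioc (0 : ℝ) T)), ‖v s‖ ≤ 2 * M := by
    have h1 : ∀ᵐ s ∂(volume.restrict (Ioo (0 : ℝ) T)),
        (‖v s‖₊ : ℝ≥0∞) ≤ eLpNormEssSup v (volume.restrict (Ioo (0 : ℝ) T)) :=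
      MeasureTheory.ae_le_eLpNormEssSup
    have h2' : eLpNormEssSup v (volume.restrict (Ioo (0 : ℝ) T)) ≤ ENNReal.ofReal (2 * M) := by
      have h3 := hvlt
      rw [supNorm, eLpNorm_exponent_top] at h3
      exact h3.le
    rw [hres] at h1 h2' 
    filter_upwards [h1] with s hs
    have h4 : ENNReal.ofReal ‖v s‖ ≤ ENNReal.ofReal (2 * M) := by
      rw [ofReal_norm]; exact hs.trans h2'
    exact (ENNReal.ofReal_le_ofReal_iff (by positivity)).1 h4
  have hexp : ∀ Y : EuclideanSpace ℝ (Fin n) →L[ℝ] EuclideanSpace ℝ (Fin n),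
      ‖Y‖ ≤ ‖Matrix.toEuclideanCLM (𝕜 := ℝ) A‖ → ‖NormedSpace.exp Y‖ ≤ C := fun Y hY =>
    (norm_exp_le_exp_norm hn _).trans (Real.exp_le_exp.2 hY)
  have hsm : ∀ r : ℝ, |r| ≤ 1 →
      ‖r • Matrix.toEuclideanCLM (𝕜 := ℝ) A‖ ≤ ‖Matrix.toEuclideanCLM (𝕜 := ℝ) A‖ := by
    intro r hr
    refine (norm_smul_le r (Matrix.toEuclideanCLM (𝕜 := ℝ) A)).trans ?_
    rw [Real.norm_eq_abs]
    nlinarith [norm_nonneg (Matrix.toEuclideanCLM (𝕜 := ℝ) A), abs_nonneg r]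
  have hIb : ‖reachOutput A B T v‖ ≤ C * (‖Bc‖ * (2 * M)) * T := by
    rw [reachOutput]
    have hmeas : volume (Ioc (0 : ℝ) T) < ⊤ := by
      rw [Real.volume_Ioc]; exact ENNReal.ofReal_lt_top
    have hae : ∀ᵐ s ∂(volume.restrict (Ioc (0 : ℝ) T)),
        ‖mulVecE (NormedSpace.exp ((T - s) • A)) (mulVecE B (v s))‖
          ≤ C * (‖Bc‖ * (2 * M)) := by
      filter_upwards [hvb, ae_restrict_mem measurableSet_Ioc] with s hs hmem
      have hkey : mulVecE (NormedSpace.exp ((T - s) • A)) (mulVecE B (v s))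
          = NormedSpace.exp ((T - s) • Matrix.toEuclideanCLM (𝕜 := ℝ) A) (Bc (v s)) := by
        have h1 : mulVecE B (v s) = Bc (v s) := rfl
        have h2 : mulVecE (NormedSpace.exp ((T - s) • A)) (mulVecE B (v s))
            = (Matrix.toEuclideanCLM (𝕜 := ℝ) (NormedSpace.exp ((T - s) • A)))
                (mulVecE B (v s)) := rfl
        rw [h2, toEuclideanCLM_exp, _root_.map_smul, h1]
      rw [hkey]
      have hb1 : ‖NormedSpace.exp ((T - s) • Matrix.toEuclideanCLM (𝕜 := ℝ) A)‖ ≤ C := by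
        refine hexp _ (hsm _ ?_)
        rw [abs_of_nonneg (by linarith [hmem.2])]
        linarith [hmem.1]
      calc ‖NormedSpace.exp ((T - s) • Matrix.toEuclideanCLM (𝕜 := ℝ) A) (Bc (v s))‖
          ≤ ‖NormedSpace.exp ((T - s) • Matrix.toEuclideanCLM (𝕜 := ℝ) A)‖ * ‖Bc (v s)‖ :=
            ContinuousLinearMap.le_opNorm _ _
        _ ≤ C * (‖Bc‖ * (2 * M)) := by
            have h3 : ‖Bc (v s)‖ ≤ ‖Bc‖ * ‖v s‖ := ContinuousLinearMap.le_opNorm _ _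
            have h4 : ‖Bc‖ * ‖v s‖ ≤ ‖Bc‖ * (2 * M) :=
              mul_le_mul_of_nonneg_left hs (norm_nonneg _)
            nlinarith [norm_nonneg (Bc (v s)),
              norm_nonneg (NormedSpace.exp ((T - s) • Matrix.toEuclideanCLM (𝕜 := ℝ) A))]
    have hmain := MeasureTheory.norm_setIntegral_le_of_norm_le_const_ae (μ := volume) hmeas hae
    refine hmain.trans (le_of_eq ?_)
    rw [measureReal_def, Real.volume_Ioc, sub_zero, ENNReal.toReal_ofReal hT.le]
  have hstate := hvadm.2.2
  rw [state] at hstate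
  have hEy : mulVecE (NormedSpace.exp (T • A)) y0
      = NormedSpace.exp (T • Matrix.toEuclideanCLM (𝕜 := ℝ) A) y0 := by
    have h2 : mulVecE (NormedSpace.exp (T • A)) y0
        = (Matrix.toEuclideanCLM (𝕜 := ℝ) (NormedSpace.exp (T • A))) y0 := rfl
    rw [h2, toEuclideanCLM_exp, _root_.map_smul]
  have hinv : NormedSpace.exp (-(T • Matrix.toEuclideanCLM (𝕜 := ℝ) A))
      * NormedSpace.exp (T • Matrix.toEuclideanCLM (𝕜 := ℝ) A) = 1 := by
    have hcomm : Commute (-(T • Matrix.toEuclideanCLM (𝕜 := ℝ) A))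
        (T • Matrix.toEuclideanCLM (𝕜 := ℝ) A) :=
      (Commute.refl (T • Matrix.toEuclideanCLM (𝕜 := ℝ) A)).neg_left
    rw [← NormedSpace.exp_add_of_commute_of_mem_ball (𝕂 := ℝ) hcomm
      ((NormedSpace.expSeries_radius_eq_top ℝ (EuclideanSpace ℝ (Fin n) →L[ℝ] EuclideanSpace ℝ (Fin n))).symm ▸ edist_lt_top _ _)
      ((NormedSpace.expSeries_radius_eq_top ℝ (EuclideanSpace ℝ (Fin n) →L[ℝ] EuclideanSpace ℝ (Fin n))).symm ▸ edist_lt_top _ _), neg_add_cancel, NormedSpace.exp_zero]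
  have hlow : ‖y0‖ ≤ C * ‖NormedSpace.exp (T • Matrix.toEuclideanCLM (𝕜 := ℝ) A) y0‖ := by
    have hy : y0 = NormedSpace.exp (-(T • Matrix.toEuclideanCLM (𝕜 := ℝ) A))
        (NormedSpace.exp (T • Matrix.toEuclideanCLM (𝕜 := ℝ) A) y0) := by
      rw [← ContinuousLinearMap.mul_apply, hinv, ContinuousLinearMap.one_apply]
    have hneg : ‖NormedSpace.exp (-(T • Matrix.toEuclideanCLM (𝕜 := ℝ) A))‖ ≤ C := by
      refine hexp _ ?_
      rw [norm_neg]
      refine hsm T ?_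
      rw [abs_of_nonneg hT.le]
      exact hT1
    calc ‖y0‖ = ‖NormedSpace.exp (-(T • Matrix.toEuclideanCLM (𝕜 := ℝ) A))
          (NormedSpace.exp (T • Matrix.toEuclideanCLM (𝕜 := ℝ) A) y0)‖ := by rw [← hy]
      _ ≤ ‖NormedSpace.exp (-(T • Matrix.toEuclideanCLM (𝕜 := ℝ) A))‖
          * ‖NormedSpace.exp (T • Matrix.toEuclideanCLM (𝕜 := ℝ) A) y0‖ :=
            ContinuousLinearMap.le_opNorm _ _
      _ ≤ C * ‖NormedSpace.exp (T • Matrix.toEuclideanCLM (𝕜 := ℝ) A) y0‖ :=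
            mul_le_mul_of_nonneg_right hneg (norm_nonneg _)
  rw [hEy] at hstate
  have hnorm_eq : ‖NormedSpace.exp (T • Matrix.toEuclideanCLM (𝕜 := ℝ) A) y0‖
      = ‖reachOutput A B T v‖ := by
    have h5 : NormedSpace.exp (T • Matrix.toEuclideanCLM (𝕜 := ℝ) A) y0
        = -reachOutput A B T v := eq_neg_of_add_eq_zero_left hstate
    rw [h5, norm_neg]
  have hfin : ‖y0‖ ≤ C * (C * (‖Bc‖ * (2 * M)) * T) := by
    rw [hnorm_eq] at hlow
    exact hlow.trans (mul_le_mul_of_nonneg_left hIb hC0.le)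
  have hT3 : T * (C * D) < ‖y0‖ := (lt_div_iff₀ (by positivity)).1 hT2
  nlinarith [mul_pos hC0 hT]

end ControlBBP
end
end
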